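/- arXiv:1910.02117 — 2 statements merged into one kernel-verified Lean document; each statement's English description precedes it below -/
import Mathlib

section
/- For n ≥ 1 and k ≥ 1, the group BS(1, n^k) embeds as a finite index subgroup in BS(1, n); consequently BS(1, n^{k₁}) and BS(1, n^{k₂}) are commensurable for all k₁, k₂ ≥ 1. -/
def AbstractlyCommensurable (G : Type*) (H : Type*) [Group G] [Group H] : Prop :=
  ∃ (A : Subgroup G) (B : Subgroup H), A.FiniteIndex ∧ B.FiniteIndex ∧ Nonempty (A ≃* B)

def BSRel (m n : ℤ) : Set (FreeGroup Bool) :=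
  {(FreeGroup.of false)⁻¹ * FreeGroup.of true ^ m * FreeGroup.of false *
    (FreeGroup.of true ^ n)⁻¹}

abbrev BS (m n : ℤ) : Type := PresentedGroup (BSRel m n)

/-!
The map `a ↦ a`, `t ↦ t ^ k` respects the relation of `BS(1, n ^ k)` because
`t⁻ᵏ a tᵏ = a ^ (n ^ k)` in `BS(1, n)`. Every element of `BS(1, n)` can be written
`tⁱ a^z t⁻ʲ` with `i j : ℕ`; the exponent sum of `t` recovers `i - j`, and `a` has
infinite order (translation by `1` and scaling by `1 / n` on `ℚ` satisfy the relation), so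
the map is injective. Its image contains every element whose `t`-exponent sum is divisible
by `k`, a subgroup of index `k`. Two groups embedding with finite index into a common group
are commensurable: intersect the images.
-/

theorem AbstractlyCommensurable.of_injective {G₁ G₂ H : Type*} [Group G₁] [Group G₂] [Group H]
    {f₁ : G₁ →* H} {f₂ : G₂ →* H} (hf₁ : Function.Injective f₁) (hf₂ : Function.Injective f₂)
    [f₁.range.FiniteIndex] [f₂.range.FiniteIndex] : AbstractlyCommensurable G₁ G₂ := by
  refine ⟨f₂.range.comap f₁, f₁.range.comap f₂, ⟨?_⟩, ⟨?_⟩, ⟨?_⟩⟩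
  · rw [Subgroup.index_comap]; exact Subgroup.FiniteIndex.index_ne_zero
  · rw [Subgroup.index_comap]; exact Subgroup.FiniteIndex.index_ne_zero
  · refine ((f₂.range.comap f₁).equivMapOfInjective f₁ hf₁).trans
      ((MulEquiv.subgroupCongr ?_).trans ((f₁.range.comap f₂).equivMapOfInjective f₂ hf₂).symm)
    rw [Subgroup.map_comap_eq, Subgroup.map_comap_eq, inf_comm]

namespace BS

open Multiplicative

variable {m n : ℤ}

def a : BS m n := PresentedGroup.of true

def t : BS m n := PresentedGroup.of false

theorem t_inv_mul_a_zpow_mul_t : t⁻¹ * a ^ m * t = (a : BS m n) ^ n := by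
  have h : PresentedGroup.mk (BSRel m n)
      ((FreeGroup.of false)⁻¹ * .of true ^ m * .of false * (.of true ^ n)⁻¹) = 1 :=
    (QuotientGroup.eq_one_iff _).mpr (Subgroup.subset_normalClosure rfl)
  simp only [map_mul, map_inv, map_zpow] at h
  exact mul_inv_eq_one.mp h

theorem a_zpow_mul_t (z : ℤ) : (a : BS 1 n) ^ z * t = t * a ^ (n * z) := by
  have : SemiconjBy t (a ^ n) (a : BS 1 n) := by
    rw [SemiconjBy, ← t_inv_mul_a_zpow_mul_t, zpow_one]; group
  rw [zpow_mul]
  exact (this.zpow_right z).symm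

theorem a_zpow_mul_t_pow (e : ℕ) (z : ℤ) : (a : BS 1 n) ^ z * t ^ e = t ^ e * a ^ (n ^ e * z) := by
  induction e generalizing z with
  | zero => simp
  | succ e ih =>
    rw [pow_succ, ← mul_assoc, ih, mul_assoc, a_zpow_mul_t, pow_succ', mul_assoc n, mul_assoc]

theorem exists_normal_form (g : BS 1 n) : ∃ (i j : ℕ) (z : ℤ), g = t ^ i * a ^ z * (t ^ j)⁻¹ := by
  have hg : g ∈ Subgroup.closure (Set.range (PresentedGroup.of : Bool → BS 1 n)) := by
    rw [PresentedGroup.closure_range_of]; trivial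
  induction hg using Subgroup.closure_induction_left with
  | one => exact ⟨0, 0, 0, by simp⟩
  | mul_left x hx y _ ih =>
    obtain ⟨i, j, z, rfl⟩ := ih
    obtain ⟨_ | _, rfl⟩ := hx
    · exact ⟨i + 1, j, z, by change t * _ = _; group⟩
    · refine ⟨i, j, n ^ i + z, ?_⟩
      change a * _ = _
      rw [zpow_add, ← mul_assoc (t ^ i), ← mul_one (n ^ i), ← a_zpow_mul_t_pow, zpow_one]
      group
  | inv_mul_cancel x hx y _ ih =>
    obtain ⟨i, j, z, rfl⟩ := ih
    obtain ⟨_ | _, rfl⟩ := hx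
    · cases i with
      | zero =>
        refine ⟨0, j + 1, n * z, ?_⟩
        change t⁻¹ * _ = _
        rw [eq_inv_mul_of_mul_eq (a_zpow_mul_t z).symm]
        group
      | succ i => exact ⟨i, j, z, by change t⁻¹ * _ = _; group⟩
    · refine ⟨i, j, -n ^ i + z, ?_⟩
      change a⁻¹ * _ = _
      rw [zpow_add, ← mul_assoc (t ^ i), ← mul_neg_one (n ^ i), ← a_zpow_mul_t_pow, zpow_neg_one]
      group

def tExp : BS m n →* Multiplicative ℤ :=
  PresentedGroup.toGroup (f := fun x => cond x 1 (ofAdd 1)) (by rintro r rfl; simp)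

@[simp]
theorem tExp_a : tExp (a : BS m n) = 1 := PresentedGroup.toGroup.of _

@[simp]
theorem tExp_t : tExp (t : BS m n) = ofAdd 1 := PresentedGroup.toGroup.of _

theorem tExp_surjective : Function.Surjective (tExp : BS m n →* Multiplicative ℤ) :=
  fun x => ⟨t ^ toAdd x, by simp [← ofAdd_zsmul]⟩

theorem tExp_normal_form (i j : ℕ) (z : ℤ) :
    tExp (t ^ i * a ^ z * (t ^ j)⁻¹ : BS m n) = ofAdd ((i : ℤ) - j) := by
  simp [← ofAdd_nsmul, sub_eq_add_neg]

-- `t` scales by `m / n`, so that `t⁻¹ a ^ m t` is translation by `n`.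
def toPerm (hm : m ≠ 0) (hn : n ≠ 0) : BS m n →* Equiv.Perm ℚ :=
  PresentedGroup.toGroup
    (f := fun x => cond x (Equiv.addRight 1) (Equiv.mulRight₀ ((m : ℚ) / n) (by simp [hm, hn])))
    (by
      rintro r rfl
      ext x
      simp [field])

theorem a_zpow_eq_one_iff (hm : m ≠ 0) (hn : n ≠ 0) {z : ℤ} : (a : BS m n) ^ z = 1 ↔ z = 0 := by
  refine ⟨fun h => ?_, fun h => by rw [h, zpow_zero]⟩
  have := congrArg (fun g => toPerm hm hn g 0) h
  simpa [a, toPerm] using this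

variable (n) in
def powHom (k : ℕ) : BS 1 (n ^ k) →* BS 1 n :=
  PresentedGroup.toGroup (f := fun x => cond x a (t ^ k)) (by
    rintro r rfl
    have := a_zpow_mul_t_pow (n := n) k 1
    simp only [mul_one, zpow_one] at this
    simp only [map_mul, map_inv, map_zpow, FreeGroup.lift_apply_of, cond_true, cond_false, zpow_one]
    rw [mul_inv_eq_one, mul_assoc, this, inv_mul_cancel_left])

@[simp]
theorem powHom_a (k : ℕ) : powHom n k a = a := PresentedGroup.toGroup.of _

@[simp]
theorem powHom_t (k : ℕ) : powHom n k t = t ^ k := PresentedGroup.toGroup.of _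

theorem powHom_injective {k : ℕ} (hn : n ≠ 0) (hk : k ≠ 0) : Function.Injective (powHom n k) := by
  rw [injective_iff_map_eq_one]
  intro g hg
  obtain ⟨i, j, z, rfl⟩ := exists_normal_form g
  simp only [map_mul, map_inv, map_pow, map_zpow, powHom_a, powHom_t, ← pow_mul] at hg
  obtain rfl : i = j := by
    have := congrArg tExp hg
    rw [tExp_normal_form, map_one, ← ofAdd_zero, ofAdd.injective.eq_iff] at this
    have : k * i = k * j := by omega
    exact Nat.eq_of_mul_eq_mul_left (Nat.pos_of_ne_zero hk) this
  obtain rfl : z = 0 := (a_zpow_eq_one_iff one_ne_zero hn).mp (conj_eq_one_iff.mp hg)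
  simp

theorem comap_tExp_zmultiples_le_range {k : ℕ} (hk : k ≠ 0) :
    (AddSubgroup.zmultiples (k : ℤ)).toSubgroup.comap tExp ≤ (powHom n k).range := by
  intro g hg
  obtain ⟨i, j, z, rfl⟩ := exists_normal_form g
  obtain ⟨w, hw⟩ := hg
  simp only [tExp_normal_form, toAdd_ofAdd, smul_eq_mul] at hw
  obtain ⟨l, rfl⟩ := Nat.exists_eq_succ_of_ne_zero hk
  refine ⟨t ^ i * a ^ (n ^ (l * i) * z) * (t ^ i)⁻¹ * t ^ w, ?_⟩
  have hconj : t ^ (l * i) * a ^ (n ^ (l * i) * z) * (t ^ (l * i))⁻¹ = (a : BS 1 n) ^ z := by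
    rw [← a_zpow_mul_t_pow]; group
  have hpow : ((t : BS 1 n) ^ (l + 1)) ^ w = t ^ ((i : ℤ) - j) := by
    rw [← zpow_natCast, ← zpow_mul, mul_comm, ← hw]
  simp only [map_mul, map_inv, map_pow, map_zpow, powHom_a, powHom_t, hpow, ← pow_mul,
    Nat.succ_mul, pow_add, ← hconj]
  group

theorem finiteIndex_range_powHom {k : ℕ} (hk : k ≠ 0) : (powHom n k).range.FiniteIndex := by
  have : ((AddSubgroup.zmultiples (k : ℤ)).toSubgroup.comap (tExp : BS 1 n →* _)).FiniteIndex :=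
    ⟨by
      rw [Subgroup.index_comap_of_surjective _ tExp_surjective, AddSubgroup.index_toSubgroup,
        Int.index_zmultiples]
      simpa using hk⟩
  exact Subgroup.finiteIndex_of_le (comap_tExp_zmultiples_le_range hk)

end BS

theorem BS_one_npow_commensurable (n k : ℕ) (hn : 1 ≤ n) (hk : 1 ≤ k) :
    (∃ H : Subgroup (BS 1 (n : ℤ)), H.FiniteIndex ∧
      Nonempty (BS 1 ((n : ℤ) ^ k) ≃* H)) ∧
    (∀ k₁ k₂ : ℕ, 1 ≤ k₁ → 1 ≤ k₂ →
      AbstractlyCommensurable (BS 1 ((n : ℤ) ^ k₁)) (BS 1 ((n : ℤ) ^ k₂))) := by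
  have hn0 : (n : ℤ) ≠ 0 := by omega
  have hinj (j : ℕ) (hj : 1 ≤ j) : Function.Injective (BS.powHom (n : ℤ) j) :=
    BS.powHom_injective hn0 (by omega)
  have hfin (j : ℕ) (hj : 1 ≤ j) : (BS.powHom (n : ℤ) j).range.FiniteIndex :=
    BS.finiteIndex_range_powHom (by omega)
  refine ⟨⟨_, hfin k hk, ⟨MonoidHom.ofInjective (hinj k hk)⟩⟩, fun k₁ k₂ hk₁ hk₂ => ?_⟩
  have := hfin k₁ hk₁
  have := hfin k₂ hk₂
  exact AbstractlyCommensurable.of_injective (hinj k₁ hk₁) (hinj k₂ hk₂)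
end

section
/- Let d ≥ 2 and n ≥ 2, and let G = G^d_{1,n} = ⟨a, t₁, …, t_d ∣ t_i⁻¹ a t_i = aⁿ, i = 1,…,d⟩. For every k > 2, the group G^k_{1,n} = ⟨b, s₁, …, s_k ∣ s_j⁻¹ b s_j = bⁿ, j = 1,…,k⟩ embeds as a subgroup of finite index in G²_{1,n}. -/
def GBSRels (k : ℕ) (A B : Fin k → ℤ) : Set (FreeGroup (Option (Fin k))) :=
  ⋃ i : Fin k,
    {(FreeGroup.of (some i))⁻¹ * FreeGroup.of none ^ (A i) * FreeGroup.of (some i) *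
      (FreeGroup.of none ^ (B i))⁻¹}

abbrev GBSBouquet (k : ℕ) (A B : Fin k → ℤ) : Type := PresentedGroup (GBSRels k A B)

/-- `G^d_{1,n}`: the GBS group which is a bouquet of `d` circles all labelled `(1, n)`. -/
abbrev GBSOneN (d n : ℕ) : Type :=
  GBSBouquet d (fun _ => (1 : ℤ)) (fun _ => (n : ℤ))

/-!
Write `G² = ⟨a, t₀, t₁⟩`, let `k = c + 2`, `uᵢ = t₀ⁱ t₁ t₀⁻ⁱ`, `σ = u_c` and `b = t₀ᶜ a t₀⁻ᶜ`, so
that `t₀ⁱ a t₀⁻ⁱ = b^(nᶜ⁻ⁱ)` for `i ≤ c`. The `c + 2` elements `σ^(c-i) uᵢ σ^(i-c)` (`i ≤ c`) and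
`t₀^(c+1) σ⁻ᶜ` each conjugate `b` to `bⁿ`, which defines `φ : G^(c+2) → G²`; these are the
Reidemeister–Schreier generators of the kernel of `G² → ℤ/(c+1)`, `t₀ ↦ 1`, with their edge labels
normalised to `(1, n)` by conjugating with powers of `σ`.

The range of `φ` has finite index because the generators of `G²` permute the `c + 1` cosets
`t₀⁻ⁱ · range φ`. It is injective because there is a homomorphism `Ψ : G² → G^(c+2) ≀ ℤ/(c+1)`
(the induced representation) such that `Ψ (φ g)` lies in the base group and has coordinate `g`
at the identity.
-/

section ConjPow

variable {G : Type*} [Group G] {x y : G} {n : ℕ}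

theorem inv_mul_pow_mul_of_inv_mul_mul_eq_pow (h : x⁻¹ * y * x = y ^ n) (e : ℕ) :
    x⁻¹ * y ^ e * x = y ^ (n * e) := by
  simpa [h, pow_mul] using (conj_pow (a := x⁻¹) (b := y) (i := e)).symm

theorem inv_pow_mul_pow_mul_pow_of_inv_mul_mul_eq_pow (h : x⁻¹ * y * x = y ^ n) (m e : ℕ) :
    (x ^ m)⁻¹ * y ^ e * x ^ m = y ^ (n ^ m * e) := by
  induction m with
  | zero => simp
  | succ m ih =>
    rw [pow_succ, show (x ^ m * x)⁻¹ * y ^ e * (x ^ m * x) =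
      x⁻¹ * ((x ^ m)⁻¹ * y ^ e * x ^ m) * x by group, ih,
      inv_mul_pow_mul_of_inv_mul_mul_eq_pow h, pow_succ, mul_assoc, mul_left_comm]

theorem pow_mul_pow_mul_inv_pow_of_inv_mul_mul_eq_pow (h : x⁻¹ * y * x = y ^ n) (m e : ℕ) :
    x ^ m * y ^ (n ^ m * e) * (x ^ m)⁻¹ = y ^ e := by
  rw [← inv_pow_mul_pow_mul_pow_of_inv_mul_mul_eq_pow h]
  group

end ConjPow

section FiniteInvariantSet

variable {G α : Type*} [Group G] [MulAction G α] {Y : Set α}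

theorem Set.MapsTo.inv_smul_of_finite (hY : Y.Finite) {g : G} (h : Set.MapsTo (g • ·) Y Y) :
    Set.MapsTo (g⁻¹ • ·) Y Y := by
  intro y hy
  obtain ⟨z, hz, rfl⟩ := ((hY.injOn_iff_bijOn_of_mapsTo h).1
    (MulAction.injective g).injOn).surjOn hy
  simpa using hz

theorem Set.MapsTo.smul_of_closure_eq_top (hY : Y.Finite) {S : Set G}
    (hS : Subgroup.closure S = ⊤) (h : ∀ s ∈ S, Set.MapsTo (s • ·) Y Y) (g : G) :
    Set.MapsTo (g • ·) Y Y := by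
  have hg : g ∈ Subgroup.closure S := hS ▸ Subgroup.mem_top g
  induction hg using Subgroup.closure_induction with
  | mem s hs => exact h s hs
  | one => exact fun y hy => by simpa using hy
  | mul g g' _ _ hg hg' => exact fun y hy => by simpa [mul_smul] using hg (hg' hy)
  | inv g _ hg => exact hg.inv_smul_of_finite hY

theorem Subgroup.finiteIndex_of_mapsTo_smul (H : Subgroup G) {Y : Set (G ⧸ H)} (hY : Y.Finite)
    (h1 : ((1 : G) : G ⧸ H) ∈ Y) {S : Set G} (hS : Subgroup.closure S = ⊤)
    (h : ∀ s ∈ S, Set.MapsTo (s • ·) Y Y) : H.FiniteIndex := by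
  have : Finite (G ⧸ H) := by
    refine Set.finite_univ_iff.1 (hY.subset fun q _ => ?_)
    induction q using QuotientGroup.induction_on with
    | H g => simpa using Set.MapsTo.smul_of_closure_eq_top hY hS h g h1
  exact H.finiteIndex_of_finite_quotient

theorem QuotientGroup.smul_coe_inv_eq_of_conj_mem {H : Subgroup G} {g x : G}
    (h : x * g * x⁻¹ ∈ H) : g • ((x⁻¹ : G) : G ⧸ H) = (x⁻¹ : G) := by
  rw [MulAction.Quotient.smul_coe, QuotientGroup.eq]
  simpa [mul_assoc] using inv_mem h

end FiniteInvariantSet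

namespace RegularWreathProduct

variable {D Q : Type*} [Group D] [Group Q]

def ofBase : (Q → D) →* D ≀ᵣ Q where
  toFun f := ⟨f, 1⟩
  map_one' := rfl
  map_mul' f g := by ext <;> simp [mul_def]

@[simp] theorem ofBase_left (f : Q → D) : (ofBase f).left = f := rfl

@[simp] theorem ofBase_right (f : Q → D) : (ofBase f).right = 1 := rfl

theorem inv_mul_ofBase_mul (w : D ≀ᵣ Q) (f : Q → D) :
    w⁻¹ * ofBase f * w =
      ofBase fun x => (w.left (w.right * x))⁻¹ * f (w.right * x) * w.left (w.right * x) := by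
  ext x <;> simp [mul_def, inv_left, inv_right]

theorem pow_right (w : D ≀ᵣ Q) (j : ℕ) : (w ^ j).right = w.right ^ j := map_pow rightHom w j

theorem pow_succ_left_one (w : D ≀ᵣ Q) (j : ℕ) :
    (w ^ (j + 1)).left 1 = (w ^ j).left 1 * w.left (w ^ j).right⁻¹ := by
  rw [pow_succ, mul_left]
  simp

def baseGraph : Subgroup (D ≀ᵣ Q × D) where
  carrier := {p | p.1.right = 1 ∧ p.1.left 1 = p.2}
  one_mem' := ⟨rfl, rfl⟩
  mul_mem' := by
    rintro ⟨w, _⟩ ⟨v, _⟩ ⟨hw : w.right = 1, hd : w.left 1 = _⟩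
      ⟨hv : v.right = 1, he : v.left 1 = _⟩
    subst hd he
    exact ⟨by simp [mul_right, hw, hv], by simp [mul_left, hw]⟩
  inv_mem' := by
    rintro ⟨w, _⟩ ⟨hw : w.right = 1, hd : w.left 1 = _⟩
    subst hd
    exact ⟨by simp [inv_right, hw], by simp [inv_left, hw]⟩

theorem conj_ofBase_mem_baseGraph {w : D ≀ᵣ Q} (hw : w.left 1 = 1) (f : Q → D) :
    (w * ofBase f * w⁻¹, f w.right⁻¹) ∈ baseGraph :=
  ⟨by simp [mul_right, inv_right], by simp [mul_left, inv_left, hw]⟩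

theorem injective_of_mem_baseGraph {K : Type*} [Group K] (χ : K →* K ≀ᵣ Q) {S : Set K}
    (hS : Subgroup.closure S = ⊤) (h : ∀ x ∈ S, (χ x, x) ∈ baseGraph) :
    Function.Injective χ := by
  have hgraph (g : K) : (χ g, g) ∈ baseGraph :=
    (Subgroup.closure_le (baseGraph.comap (χ.prod (MonoidHom.id K)))).2 h
      (hS ▸ Subgroup.mem_top g)
  refine (injective_iff_map_eq_one χ).2 fun g hg => ?_
  simpa [hg] using (hgraph g).2.symm

end RegularWreathProduct

namespace GBSBouquet

variable {k : ℕ} {A B : Fin k → ℤ}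

def a : GBSBouquet k A B := PresentedGroup.of none

def t (i : Fin k) : GBSBouquet k A B := PresentedGroup.of (some i)

theorem t_inv_mul_a_zpow_mul_t (i : Fin k) :
    (t i)⁻¹ * a ^ A i * t i = (a : GBSBouquet k A B) ^ B i := by
  have h := PresentedGroup.one_of_mem (rels := GBSRels k A B) (Set.mem_iUnion.2 ⟨i, rfl⟩)
  rwa [map_mul, map_mul, map_mul, map_inv, map_inv, map_zpow, map_zpow, mul_inv_eq_one] at h

theorem closure_insert_a_range_t :
    Subgroup.closure (insert a (Set.range t)) = (⊤ : Subgroup (GBSBouquet k A B)) := by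
  rw [← PresentedGroup.closure_range_of, Option.range_eq]
  rfl

def lift {H : Type*} [Group H] (x : H) (y : Fin k → H)
    (h : ∀ i, (y i)⁻¹ * x ^ A i * y i = x ^ B i) : GBSBouquet k A B →* H :=
  PresentedGroup.toGroup (f := fun g => Option.elim g x y) <| by
    simp only [GBSRels, Set.mem_iUnion, Set.mem_singleton_iff]
    rintro _ ⟨i, rfl⟩
    simp [h]

section Lift

variable {H : Type*} [Group H] {x : H} {y : Fin k → H}
  {h : ∀ i, (y i)⁻¹ * x ^ A i * y i = x ^ B i}

@[simp] theorem lift_a : lift x y h a = x := PresentedGroup.toGroup.of _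

@[simp] theorem lift_t (i : Fin k) : lift x y h (t i) = y i := PresentedGroup.toGroup.of _

end Lift

end GBSBouquet

namespace GBSOneN

open GBSBouquet

section Presentation

variable {d n : ℕ}

theorem t_inv_mul_a_mul_t (i : Fin d) : (t i)⁻¹ * a * t i = (a : GBSOneN d n) ^ n := by
  simpa using t_inv_mul_a_zpow_mul_t (A := fun _ => (1 : ℤ)) (B := fun _ => (n : ℤ)) i

def lift {H : Type*} [Group H] (x : H) (y : Fin d → H) (h : ∀ i, (y i)⁻¹ * x * y i = x ^ n) :
    GBSOneN d n →* H :=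
  GBSBouquet.lift x y (by simpa using h)

variable {H : Type*} [Group H] {x : H} {y : Fin d → H} {h : ∀ i, (y i)⁻¹ * x * y i = x ^ n}

@[simp] theorem lift_a : lift x y h a = x := by
  simp [lift]

@[simp] theorem lift_t (i : Fin d) : lift x y h (t i) = y i := by
  simp [lift]

end Presentation

variable {n : ℕ} (c : ℕ)

section Embedding

def uConj (j : ℕ) : GBSOneN 2 n := t 0 ^ j * t 1 * (t 0 ^ j)⁻¹

def imageA : GBSOneN 2 n := t 0 ^ c * a * (t 0 ^ c)⁻¹

def imageS (i : Fin (c + 1)) : GBSOneN 2 n :=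
  uConj c ^ (c - i) * uConj i * (uConj c ^ (c - i))⁻¹

def imageT : GBSOneN 2 n := t 0 ^ (c + 1) * (uConj c ^ c)⁻¹

theorem uConj_inv_mul_conj_a_mul (j : ℕ) :
    (uConj j)⁻¹ * (t 0 ^ j * a * (t 0 ^ j)⁻¹) * uConj j =
      (t 0 ^ j * a * (t 0 ^ j)⁻¹ : GBSOneN 2 n) ^ n := by
  rw [conj_pow, ← t_inv_mul_a_mul_t 1, uConj]
  group

theorem conj_a_eq_imageA_pow {i : ℕ} (hi : i ≤ c) :
    t 0 ^ i * a * (t 0 ^ i)⁻¹ = (imageA c : GBSOneN 2 n) ^ n ^ (c - i) := by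
  obtain ⟨m, rfl⟩ := Nat.exists_eq_add_of_le hi
  have h := pow_mul_pow_mul_inv_pow_of_inv_mul_mul_eq_pow
    (t_inv_mul_a_mul_t (d := 2) (n := n) 0) m 1
  rw [mul_one, pow_one] at h
  rw [imageA, conj_pow, Nat.add_sub_cancel_left, pow_add]
  conv_lhs => rw [← h]
  group

theorem uConj_inv_mul_imageA_mul :
    (uConj c)⁻¹ * imageA c * uConj c = (imageA c : GBSOneN 2 n) ^ n :=
  uConj_inv_mul_conj_a_mul c

theorem imageS_inv_mul_imageA_mul (i : Fin (c + 1)) :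
    (imageS c i)⁻¹ * imageA c * imageS c i = (imageA c : GBSOneN 2 n) ^ n := by
  have hσ := uConj_inv_mul_imageA_mul (n := n) c
  have hσpow := inv_pow_mul_pow_mul_pow_of_inv_mul_mul_eq_pow hσ (c - i) 1
  rw [pow_one, mul_one] at hσpow
  have hconj := conj_a_eq_imageA_pow (n := n) c i.is_le
  calc (imageS c i)⁻¹ * imageA c * imageS c i
      = uConj c ^ (c - i) * ((uConj i)⁻¹ *
          ((uConj c ^ (c - i))⁻¹ * imageA c * uConj c ^ (c - i)) * uConj i) *
            (uConj c ^ (c - i))⁻¹ := by rw [imageS]; group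
    _ = uConj c ^ (c - i) * imageA c ^ (n ^ (c - i) * n) * (uConj c ^ (c - i))⁻¹ := by
      rw [hσpow, ← hconj, uConj_inv_mul_conj_a_mul, hconj, ← pow_mul]
    _ = imageA c ^ n := pow_mul_pow_mul_inv_pow_of_inv_mul_mul_eq_pow hσ _ _

theorem imageT_inv_mul_imageA_mul :
    (imageT c)⁻¹ * imageA c * imageT c = (imageA c : GBSOneN 2 n) ^ n := by
  have hσ := uConj_inv_mul_imageA_mul (n := n) c
  have ha : (a : GBSOneN 2 n) = imageA c ^ n ^ c := by
    simpa using conj_a_eq_imageA_pow (n := n) c (Nat.zero_le c)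
  calc (imageT c)⁻¹ * imageA c * imageT c
      = uConj c ^ c * ((t 0)⁻¹ * a * t 0) * (uConj c ^ c)⁻¹ := by rw [imageT, imageA]; group
    _ = uConj c ^ c * imageA c ^ (n ^ c * n) * (uConj c ^ c)⁻¹ := by
      rw [t_inv_mul_a_mul_t, ha, ← pow_mul]
    _ = imageA c ^ n := pow_mul_pow_mul_inv_pow_of_inv_mul_mul_eq_pow hσ _ _

def embedding : GBSOneN (c + 2) n →* GBSOneN 2 n :=
  lift (imageA c) (Fin.lastCases (imageT c) (imageS c)) fun j => by
    induction j using Fin.lastCases with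
    | last => simpa using imageT_inv_mul_imageA_mul c
    | cast i => simpa using imageS_inv_mul_imageA_mul c i

@[simp] theorem embedding_a : embedding c a = (imageA c : GBSOneN 2 n) := lift_a

@[simp] theorem embedding_t_last :
    embedding c (t (Fin.last (c + 1))) = (imageT c : GBSOneN 2 n) := by
  simp [embedding]

@[simp] theorem embedding_t_castSucc (i : Fin (c + 1)) :
    embedding c (t i.castSucc) = (imageS c i : GBSOneN 2 n) := by
  simp [embedding]

end Embedding

section FiniteIndex

theorem imageS_mem_range (i : Fin (c + 1)) : imageS c i ∈ (embedding (n := n) c).range :=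
  ⟨t i.castSucc, embedding_t_castSucc c i⟩

theorem uConj_mem_range {i : ℕ} (hi : i ≤ c) : uConj i ∈ (embedding (n := n) c).range := by
  have hσ : uConj c = imageS (n := n) c (Fin.last c) := by simp [imageS]
  have hS : uConj i =
      (uConj c ^ (c - i))⁻¹ * imageS (n := n) c ⟨i, by omega⟩ * uConj c ^ (c - i) := by
    rw [imageS]
    group
  rw [hS, hσ]
  exact mul_mem (mul_mem (inv_mem (pow_mem (imageS_mem_range c _) _)) (imageS_mem_range c _))
    (pow_mem (imageS_mem_range c _) _)

theorem t_pow_succ_mem_range : t 0 ^ (c + 1) ∈ (embedding (n := n) c).range := by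
  have : t 0 ^ (c + 1) = embedding (n := n) c (t (Fin.last (c + 1))) * uConj c ^ c := by
    simp [imageT]
  rw [this]
  exact mul_mem (MonoidHom.mem_range.2 ⟨_, rfl⟩) (pow_mem (uConj_mem_range c le_rfl) _)

theorem conj_a_mem_range {i : ℕ} (hi : i ≤ c) :
    t 0 ^ i * a * (t 0 ^ i)⁻¹ ∈ (embedding (n := n) c).range := by
  rw [conj_a_eq_imageA_pow c hi, ← embedding_a]
  exact pow_mem (MonoidHom.mem_range.2 ⟨_, rfl⟩) _

theorem exists_t_pow_inv_eq_t_smul (i : Fin (c + 1)) :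
    ∃ j : Fin (c + 1),
      (((t 0 ^ (j : ℕ))⁻¹ : GBSOneN 2 n) : GBSOneN 2 n ⧸ (embedding (n := n) c).range) =
        (t 0 : GBSOneN 2 n) • (((t 0 ^ (i : ℕ))⁻¹ : GBSOneN 2 n) :
          GBSOneN 2 n ⧸ (embedding c).range) := by
  induction i using Fin.cases with
  | zero =>
    refine ⟨Fin.last c, ?_⟩
    rw [MulAction.Quotient.smul_coe, QuotientGroup.eq]
    simpa [← pow_succ] using t_pow_succ_mem_range (n := n) c
  | succ j =>
    refine ⟨j.castSucc, ?_⟩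
    rw [MulAction.Quotient.smul_coe]
    congr 1
    simp only [Fin.val_castSucc, Fin.val_succ, smul_eq_mul]
    group

theorem embedding_range_finiteIndex : (embedding (n := n) c).range.FiniteIndex := by
  refine Subgroup.finiteIndex_of_mapsTo_smul _ (Set.finite_range fun i : Fin (c + 1) =>
    (((t 0 ^ (i : ℕ))⁻¹ : GBSOneN 2 n) : GBSOneN 2 n ⧸ (embedding c).range))
    ⟨0, by simp⟩ closure_insert_a_range_t ?_
  simp only [Set.forall_mem_insert, Set.forall_mem_range, Fin.forall_fin_two]
  refine ⟨?_, ?_, ?_⟩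
  · rintro _ ⟨i, rfl⟩
    exact ⟨i, (QuotientGroup.smul_coe_inv_eq_of_conj_mem (conj_a_mem_range c i.is_le)).symm⟩
  · rintro _ ⟨i, rfl⟩
    exact exists_t_pow_inv_eq_t_smul c i
  · rintro _ ⟨i, rfl⟩
    exact ⟨i, (QuotientGroup.smul_coe_inv_eq_of_conj_mem (uConj_mem_range c i.is_le)).symm⟩

end FiniteIndex

section Injective

open RegularWreathProduct Multiplicative

def sTop : GBSOneN (c + 2) n := t (Fin.last c).castSucc

/- `toWreath` is the induced representation of `G²` on the cosets of `range embedding`: for a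
generator `g`, coordinate `i` of `toWreath g` is the preimage under `embedding` of `t₀ⁱ g t₀⁻ʲ`,
where `range embedding * t₀ʲ` is the right coset of `t₀ⁱ g` (indices mod `c + 1`). -/

def wreathA (x : Multiplicative (Fin (c + 1))) : GBSOneN (c + 2) n :=
  a ^ n ^ (c - (toAdd x).val)

def wreathU (x : Multiplicative (Fin (c + 1))) : GBSOneN (c + 2) n :=
  (sTop c ^ (c - (toAdd x).val))⁻¹ * t (toAdd x).castSucc * sTop c ^ (c - (toAdd x).val)

def wreathT : GBSOneN (c + 2) n ≀ᵣ Multiplicative (Fin (c + 1)) :=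
  ⟨fun x => if (toAdd x).val = c then t (Fin.last (c + 1)) * sTop c ^ c else 1, ofAdd (-1)⟩

theorem sTop_inv_mul_a_mul : (sTop c)⁻¹ * a * sTop c = (a : GBSOneN (c + 2) n) ^ n :=
  t_inv_mul_a_mul_t _

theorem wreathT_left_inv_mul_wreathA_mul (i : Fin (c + 1)) :
    ((wreathT c).left (ofAdd (-1) * ofAdd i))⁻¹ * wreathA c (ofAdd (-1) * ofAdd i) *
      (wreathT c).left (ofAdd (-1) * ofAdd i) = (wreathA c (ofAdd i) : GBSOneN (c + 2) n) ^ n := by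
  rw [← ofAdd_add, neg_add_eq_sub]
  by_cases hi : i = 0
  · subst hi
    have hlast : ((0 - 1 : Fin (c + 1)) : ℕ) = c := by simp
    simp only [wreathT, wreathA, toAdd_ofAdd, hlast, if_true, Nat.sub_self, pow_zero, pow_one,
      Fin.val_zero, Nat.sub_zero, ← pow_mul]
    rw [mul_inv_rev, show (sTop c ^ c)⁻¹ * (t (Fin.last (c + 1)))⁻¹ * a *
      (t (Fin.last (c + 1)) * sTop c ^ c) = (sTop c ^ c)⁻¹ * ((t (Fin.last (c + 1)))⁻¹ * a *
      t (Fin.last (c + 1))) * sTop c ^ c by group, t_inv_mul_a_mul_t,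
      inv_pow_mul_pow_mul_pow_of_inv_mul_mul_eq_pow (sTop_inv_mul_a_mul c)]
  · have hval : ((i - 1 : Fin (c + 1)) : ℕ) = i - 1 := Fin.val_sub_one_of_ne_zero hi
    have hpos : 0 < (i : ℕ) := Nat.pos_of_ne_zero (Fin.val_ne_iff.2 hi)
    simp only [wreathT, wreathA, toAdd_ofAdd, hval, if_neg (show (i : ℕ) - 1 ≠ c by omega),
      inv_one, one_mul, mul_one, ← pow_mul, ← pow_succ]
    congr 2
    omega

theorem wreathU_inv_mul_wreathA_mul (x : Multiplicative (Fin (c + 1))) :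
    (wreathU c x)⁻¹ * wreathA c x * wreathU c x = (wreathA c x : GBSOneN (c + 2) n) ^ n := by
  simp only [wreathU, wreathA]
  set m := c - (toAdd x).val
  set s : GBSOneN (c + 2) n := t (toAdd x).castSucc
  have hs := pow_mul_pow_mul_inv_pow_of_inv_mul_mul_eq_pow (sTop_inv_mul_a_mul (n := n) c) m 1
  rw [mul_one, pow_one] at hs
  calc ((sTop c ^ m)⁻¹ * s * sTop c ^ m)⁻¹ * a ^ n ^ m * ((sTop c ^ m)⁻¹ * s * sTop c ^ m)
      = (sTop c ^ m)⁻¹ * (s⁻¹ * (sTop c ^ m * a ^ n ^ m * (sTop c ^ m)⁻¹) * s) * sTop c ^ m := by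
        group
    _ = a ^ (n ^ m * n) := by
      rw [hs, t_inv_mul_a_mul_t,
        inv_pow_mul_pow_mul_pow_of_inv_mul_mul_eq_pow (sTop_inv_mul_a_mul c)]
    _ = (a ^ n ^ m) ^ n := pow_mul _ _ _

def toWreath : GBSOneN 2 n →* GBSOneN (c + 2) n ≀ᵣ Multiplicative (Fin (c + 1)) :=
  lift (ofBase (wreathA c)) ![wreathT c, ofBase (wreathU c)] <| by
    simp only [Fin.forall_fin_two, Matrix.cons_val_zero, Matrix.cons_val_one]
    constructor
    · rw [inv_mul_ofBase_mul, ← map_pow]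
      exact congrArg ofBase (funext fun x => wreathT_left_inv_mul_wreathA_mul c (toAdd x))
    · rw [← map_inv, ← map_mul, ← map_mul, ← map_pow]
      exact congrArg ofBase (funext (wreathU_inv_mul_wreathA_mul c))

@[simp] theorem toWreath_a : toWreath c a = ofBase (wreathA (n := n) c) := lift_a

@[simp] theorem toWreath_t_zero : toWreath c (t 0) = wreathT (n := n) c := by
  simp [toWreath]

@[simp] theorem toWreath_t_one : toWreath c (t 1) = ofBase (wreathU (n := n) c) := by
  simp [toWreath]

theorem wreathT_pow_right_inv (i : Fin (c + 1)) :
    (wreathT (n := n) c ^ (i : ℕ)).right⁻¹ = ofAdd i := by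
  induction i using Fin.induction with
  | zero => simp
  | succ i ih =>
    rw [Fin.val_succ, ← Fin.val_castSucc, pow_right, pow_succ, ← pow_right, mul_inv_rev, ih]
    simp [wreathT, ← ofAdd_neg, ← ofAdd_add, ← Fin.coeSucc_eq_succ, add_comm]

theorem wreathT_pow_left_one (i : Fin (c + 1)) : (wreathT (n := n) c ^ (i : ℕ)).left 1 = 1 := by
  induction i using Fin.induction with
  | zero => rfl
  | succ i ih =>
    rw [Fin.val_succ, ← Fin.val_castSucc, pow_succ_left_one, ih, wreathT_pow_right_inv]
    simp [wreathT, i.is_lt.ne]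

theorem wreathT_pow_succ_mem_baseGraph :
    (wreathT (n := n) c ^ (c + 1), t (Fin.last (c + 1)) * sTop c ^ c) ∈ baseGraph := by
  have hr : (wreathT (n := n) c ^ c).right⁻¹ = ofAdd (Fin.last c) := by
    simpa using wreathT_pow_right_inv (n := n) c (Fin.last c)
  have hl : (wreathT (n := n) c ^ c).left 1 = 1 := by
    simpa using wreathT_pow_left_one (n := n) c (Fin.last c)
  refine ⟨?_, ?_⟩
  · rw [pow_right, pow_succ, ← pow_right, ← inv_inv ((wreathT c ^ c).right), hr]
    simp [wreathT, ← ofAdd_neg, ← ofAdd_add]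
  · rw [pow_succ_left_one, hl, hr]
    simp [wreathT]

theorem toWreath_conj_mem_baseGraph {g : GBSOneN 2 n}
    {f : Multiplicative (Fin (c + 1)) → GBSOneN (c + 2) n} (hg : toWreath c g = ofBase f)
    (i : Fin (c + 1)) :
    (toWreath c (t 0 ^ (i : ℕ) * g * (t 0 ^ (i : ℕ))⁻¹), f (ofAdd i)) ∈ baseGraph := by
  rw [map_mul, map_mul, map_inv, map_pow, toWreath_t_zero, hg, ← wreathT_pow_right_inv]
  exact conj_ofBase_mem_baseGraph (wreathT_pow_left_one c i) f

theorem toWreath_imageA_mem_baseGraph :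
    (toWreath c (imageA c), (a : GBSOneN (c + 2) n)) ∈ baseGraph := by
  simpa [imageA, wreathA] using toWreath_conj_mem_baseGraph c (toWreath_a c) (Fin.last c)

theorem toWreath_uConj_mem_baseGraph (i : Fin (c + 1)) :
    (toWreath c (uConj i), wreathU (n := n) c (ofAdd i)) ∈ baseGraph :=
  toWreath_conj_mem_baseGraph c (toWreath_t_one c) i

theorem toWreath_uConj_self_mem_baseGraph :
    (toWreath c (uConj c), sTop (n := n) c) ∈ baseGraph := by
  simpa [wreathU, sTop] using toWreath_uConj_mem_baseGraph (n := n) c (Fin.last c)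

theorem toWreath_imageS_mem_baseGraph (i : Fin (c + 1)) :
    (toWreath c (imageS c i), (t i.castSucc : GBSOneN (c + 2) n)) ∈ baseGraph := by
  have hσ := pow_mem (toWreath_uConj_self_mem_baseGraph (n := n) c) (c - i)
  convert mul_mem (mul_mem hσ (toWreath_uConj_mem_baseGraph c i)) (inv_mem hσ) using 1
  refine Prod.ext ?_ ?_
  · simp [imageS]
  · simp only [wreathU, toAdd_ofAdd, Prod.snd_mul, Prod.pow_snd, Prod.snd_inv]
    group

theorem toWreath_imageT_mem_baseGraph :
    (toWreath c (imageT c), (t (Fin.last (c + 1)) : GBSOneN (c + 2) n)) ∈ baseGraph := by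
  have hσ := pow_mem (toWreath_uConj_self_mem_baseGraph (n := n) c) c
  convert mul_mem (wreathT_pow_succ_mem_baseGraph c) (inv_mem hσ) using 1
  refine Prod.ext ?_ ?_
  · simp [imageT]
  · simp

theorem embedding_injective : Function.Injective (embedding (n := n) c) := by
  refine Function.Injective.of_comp (f := toWreath c) <|
    injective_of_mem_baseGraph ((toWreath c).comp (embedding c)) closure_insert_a_range_t ?_
  simp only [Set.forall_mem_insert, Set.forall_mem_range, MonoidHom.comp_apply, embedding_a]
  refine ⟨toWreath_imageA_mem_baseGraph c, fun j => ?_⟩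
  induction j using Fin.lastCases with
  | last => simpa using toWreath_imageT_mem_baseGraph c
  | cast i => simpa using toWreath_imageS_mem_baseGraph c i

end Injective

end GBSOneN

theorem GBSOneN_embeds_finite_index_general (n : ℕ) :
    ∀ k : ℕ, 2 < k →
      ∃ H : Subgroup (GBSOneN 2 n), H.FiniteIndex ∧
        Nonempty (GBSOneN k n ≃* H) := by
  intro k hk
  obtain ⟨c, rfl⟩ : ∃ c, k = c + 2 := ⟨k - 2, by omega⟩
  exact ⟨_, GBSOneN.embedding_range_finiteIndex c,
    ⟨MonoidHom.ofInjective (GBSOneN.embedding_injective c)⟩⟩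

theorem GBSOneN_embeds_finite_index (d n : ℕ) (hd : 2 ≤ d) (hn : 2 ≤ n) :
    ∀ k : ℕ, 2 < k →
      ∃ H : Subgroup (GBSOneN 2 n), H.FiniteIndex ∧
        Nonempty (GBSOneN k n ≃* H) :=
  GBSOneN_embeds_finite_index_general n
end
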